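/- Let λ > 0, a > 2, and let p_λ be the SCAD penalty with coordinatewise sum P_λ(x) = Σ_{j=1}^p p_λ(|x_j|) for x ∈ ℝ^p. Let ψ*, ψ̂ ∈ ℝ^p, set ν = ψ̂ − ψ*, and let S ⊆ {1,…,p} be such that ψ*_j = 0 for all j ∉ S. Then P_λ(ψ*) − P_λ(ψ̂) ≤ λ‖ν_S‖₁ − P_λ(ν_{S^c}), where ν_S (respectively ν_{S^c}) is the vector equal to ν on S (respectively on the complement of S) and zero elsewhere. -/

import Mathlib

/-- The SCAD penalty with regularization parameter `lam` and non-convexity parameter `a`. -/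
noncomputable def scad (lam a t : ℝ) : ℝ :=
  if t ≤ lam then lam * t
  else if t ≤ a * lam then -(t ^ 2 - 2 * a * lam * t + lam ^ 2) / (2 * (a - 1))
  else (a + 1) * lam ^ 2 / 2

/-- Coordinatewise SCAD penalty `P_λ(x) = Σ_j p_λ(|x_j|)`. -/
noncomputable def scadSum (lam a : ℝ) {p : ℕ} (x : Fin p → ℝ) : ℝ :=
  ∑ j, scad lam a |x j|

/-! On each of its three branches the SCAD penalty has slope in `[0, λ]`, and the branches
join continuously, so `p_λ` is monotone and `λ`-Lipschitz on all of `ℝ`. The inequality is then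
coordinatewise: for `j ∈ S`, `p_λ(|ψ*_j|) - p_λ(|ψ̂_j|) ≤ λ |ν_j|` and the `S^c` term is
`p_λ(0) = 0`; for `j ∉ S`, `ψ*_j = 0` and both sides equal `-p_λ(|ν_j|)`. -/

section

variable {lam a : ℝ}

noncomputable def scadQuad (lam a t : ℝ) : ℝ :=
  -(t ^ 2 - 2 * a * lam * t + lam ^ 2) / (2 * (a - 1))

lemma scad_eq_ite (t : ℝ) :
    scad lam a t =
      if t ≤ lam then lam * t
      else if t ≤ a * lam then scadQuad lam a t
      else (a + 1) * lam ^ 2 / 2 :=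
  rfl

lemma scadQuad_self (ha : a ≠ 1) : scadQuad lam a lam = lam * lam := by
  unfold scadQuad
  field_simp [sub_ne_zero.2 ha]
  ring

lemma scadQuad_mul_self (ha : a ≠ 1) : scadQuad lam a (a * lam) = (a + 1) * lam ^ 2 / 2 := by
  unfold scadQuad
  field_simp [sub_ne_zero.2 ha]
  ring

lemma scadQuad_sub_scadQuad (ha : a ≠ 1) (u v : ℝ) :
    scadQuad lam a v - scadQuad lam a u = (v - u) * ((2 * a * lam - u - v) / (2 * (a - 1))) := by
  unfold scadQuad
  field_simp [sub_ne_zero.2 ha]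
  ring

lemma scadQuad_sub_scadQuad_mem (ha : 1 < a) {u v : ℝ} (hu : lam ≤ u) (huv : u ≤ v)
    (hv : v ≤ a * lam) :
    0 ≤ scadQuad lam a v - scadQuad lam a u ∧
      scadQuad lam a v - scadQuad lam a u ≤ lam * (v - u) := by
  have hd : 0 < 2 * (a - 1) := by linarith
  have slope_nonneg : 0 ≤ (2 * a * lam - u - v) / (2 * (a - 1)) :=
    div_nonneg (by linarith) hd.le
  have slope_le : (2 * a * lam - u - v) / (2 * (a - 1)) ≤ lam := by
    rw [div_le_iff₀ hd]; linarith
  rw [scadQuad_sub_scadQuad ha.ne']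
  exact ⟨mul_nonneg (sub_nonneg.2 huv) slope_nonneg,
    by nlinarith [mul_le_mul_of_nonneg_left slope_le (sub_nonneg.2 huv)]⟩

lemma scad_sub_scad_mem (hlam : 0 ≤ lam) (ha : 1 < a) {u v : ℝ} (huv : u ≤ v) :
    0 ≤ scad lam a v - scad lam a u ∧ scad lam a v - scad lam a u ≤ lam * (v - u) := by
  have hq_lam := scadQuad_self (lam := lam) ha.ne'
  have hq_alam := scadQuad_mul_self (lam := lam) ha.ne'
  rw [scad_eq_ite, scad_eq_ite]
  split_ifs with hv hu hu' hv' hu hu' hu hu'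
  · exact ⟨by nlinarith, by linarith⟩
  · exact absurd huv (by linarith)
  · exact absurd huv (by linarith)
  · obtain ⟨h0, h1⟩ := scadQuad_sub_scadQuad_mem ha le_rfl (not_le.1 hv).le hv'
    exact ⟨by nlinarith, by nlinarith⟩
  · exact scadQuad_sub_scadQuad_mem ha (not_le.1 hu).le huv hv'
  · exact absurd huv (by linarith)
  · exact ⟨by nlinarith, by nlinarith⟩
  · obtain ⟨h0, h1⟩ := scadQuad_sub_scadQuad_mem ha (not_le.1 hu).le hu' le_rfl
    exact ⟨by linarith, by nlinarith⟩
  · simp [mul_nonneg hlam (sub_nonneg.2 huv)]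

lemma scad_monotone (hlam : 0 ≤ lam) (ha : 1 < a) : Monotone (scad lam a) := fun _ _ huv ↦
  sub_nonneg.1 (scad_sub_scad_mem hlam ha huv).1

lemma scad_lipschitzWith (hlam : 0 ≤ lam) (ha : 1 < a) :
    LipschitzWith (Real.toNNReal lam) (scad lam a) := by
  refine LipschitzWith.of_le_add_mul' lam fun x y ↦ ?_
  rw [Real.dist_eq]
  rcases le_total x y with hxy | hyx
  · linarith [scad_monotone hlam ha hxy, mul_nonneg hlam (abs_nonneg (x - y))]
  · rw [abs_of_nonneg (sub_nonneg.2 hyx)]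
    linarith [(scad_sub_scad_mem hlam ha hyx).2]

lemma scad_zero (hlam : 0 ≤ lam) : scad lam a 0 = 0 := by
  simp [scad, hlam]

lemma scad_abs_sub_scad_abs_le (hlam : 0 ≤ lam) (ha : 1 < a) (s t : ℝ) :
    scad lam a |s| - scad lam a |t| ≤ lam * |t - s| :=
  calc scad lam a |s| - scad lam a |t| ≤ dist (scad lam a |s|) (scad lam a |t|) := le_abs_self _
    _ ≤ lam * dist |s| |t| := by
      simpa [Real.coe_toNNReal lam hlam] using (scad_lipschitzWith hlam ha).dist_le_mul |s| |t|
    _ ≤ lam * |t - s| := by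
      rw [dist_comm, Real.dist_eq]
      exact mul_le_mul_of_nonneg_left (abs_abs_sub_abs_le_abs_sub t s) hlam

end

/-- Support decomposition inequality:
  `P_λ(ψ*) − P_λ(ψ̂) ≤ λ‖ν_S‖₁ − P_λ(ν_{S^c})` where `ν = ψ̂ − ψ*` and
  `ψ*` is supported on `S`. -/
theorem scad_support_decomposition (lam a : ℝ) (hlam : 0 < lam) (ha : 2 < a)
    (p : ℕ) (ψstar ψhat : Fin p → ℝ) (S : Finset (Fin p))
    (hsupp : ∀ j ∉ S, ψstar j = 0) :
    scadSum lam a ψstar - scadSum lam a ψhat ≤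
      lam * (∑ j, |if j ∈ S then ψhat j - ψstar j else 0|) -
        scadSum lam a (fun j => if j ∈ S then 0 else ψhat j - ψstar j) := by
  unfold scadSum
  rw [Finset.mul_sum, ← Finset.sum_sub_distrib, ← Finset.sum_sub_distrib]
  refine Finset.sum_le_sum fun j _ ↦ ?_
  by_cases hj : j ∈ S
  · simpa [hj, scad_zero hlam.le] using
      scad_abs_sub_scad_abs_le hlam.le (by linarith) (ψstar j) (ψhat j)
  · simp [hj, hsupp j hj, scad_zero hlam.le]
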